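/- Let u_1,…,u_n ∈ ℝ^d with n ≥ 2 and let W be a random vector distributed according to the empirical measure n^{−1}Σ_{i=1}^n δ_{u_i}. Then for all t ∈ ℝ^d: 1 − |E[e^{i t'W}]| ≥ (1/(π² n(n−1))) Σ_{i≠j} ξ(u_i,u_j;t), where ξ(u,v;t) = inf_{q∈ℤ}(t'(u−v)−2πq)² and the sum runs over all ordered pairs (i,j) with i ≠ j. -/

import Mathlib

open MeasureTheory ProbabilityTheory Real
open scoped BigOperators ENNReal NNReal

noncomputable section

/-- Euclidean space ℝ^d. -/
abbrev Ed (d : ℕ) := EuclideanSpace ℝ (Fin d)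

variable {d : ℕ}

/-- The characteristic function of a (Borel) measure on ℝ^d. -/
def charFn (μ : Measure (Ed d)) (t : Ed d) : ℂ :=
  ∫ x, Complex.exp (((inner ℝ t x : ℝ) : ℂ) * Complex.I) ∂μ

/-- Partial derivative in the k-th coordinate direction. -/
def partialD {F : Type*} [NormedAddCommGroup F] [NormedSpace ℝ F]
    (k : Fin d) (f : Ed d → F) : Ed d → F :=
  fun x => fderiv ℝ f x (EuclideanSpace.single k 1)

/-- Iterated partial derivative `D^ν` for a multi-index ν. -/
def mDeriv {F : Type*} [NormedAddCommGroup F] [NormedSpace ℝ F]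
    (ν : Fin d → ℕ) (f : Ed d → F) : Ed d → F :=
  (List.finRange d).foldr (fun k g => (partialD k)^[ν k] g) f

/-- The ν-th cumulant of a measure μ on ℝ^d:
`κ_ν = (−i)^{|ν|} D^ν (log φ_μ)(0)` where φ_μ is the characteristic function. -/
def cumulant (μ : Measure (Ed d)) (ν : Fin d → ℕ) : ℂ :=
  (-Complex.I) ^ (∑ k, ν k) * mDeriv ν (fun t => Complex.log (charFn μ t)) 0

/-- The finite set of multi-indices ν ∈ ℤ₊^d with |ν| = j. -/
def multiIdx (d j : ℕ) : Finset (Fin d → ℕ) :=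
  (Fintype.piFinset fun _ : Fin d => Finset.range (j + 1)).filter fun ν => ∑ k, ν k = j

/-- The differential operator `χ̄_j(−D)` applied to f, where
`χ̄_j(z) = j! Σ_{|ν|=j} (χ_ν/ν!) z^ν`. -/
def chiOpApply (χ : (Fin d → ℕ) → ℂ) (j : ℕ) (f : Ed d → ℂ) : Ed d → ℂ :=
  fun x => (j.factorial : ℂ) * (-1 : ℂ) ^ j *
    ∑ ν ∈ multiIdx d j, (χ ν / ∏ k, ((ν k).factorial : ℂ)) * mDeriv ν f x

/-- The Edgeworth polynomial operator `P̃_j(−D; {χ_ν})` applied to f: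
`P̃_j = Σ_{m=1}^{j} (1/m!) Σ*_{j_1+⋯+j_m=j} ∏_k χ̄_{j_k+2}(−D)/(j_k+2)!`,
encoded as a sum over compositions of j. -/
def edgeworthOp (χ : (Fin d → ℕ) → ℂ) (j : ℕ) (f : Ed d → ℂ) : Ed d → ℂ :=
  fun x => ∑ c : Composition j, ((c.length.factorial : ℂ))⁻¹ *
    (c.blocks.foldr
      (fun jk g => fun y => (((jk + 2).factorial : ℂ))⁻¹ * chiOpApply χ (jk + 2) g y) f) x

/-- The standard normal density on ℝ^d. -/
def gaussDensity (d : ℕ) (x : Ed d) : ℝ :=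
  (2 * π) ^ (-(d : ℝ) / 2) * Real.exp (-‖x‖ ^ 2 / 2)

/-- The density of the order-s Edgeworth signed measure
`Σ_{j=0}^{s−2} n^{−j/2} P̃_j(−D;{χ_ν}) φ(x)`. -/
def edgeworthDensity (χ : (Fin d → ℕ) → ℂ) (n s : ℕ) (x : Ed d) : ℝ :=
  (∑ j ∈ Finset.range (s - 1), (((n : ℝ) ^ (-(j : ℝ) / 2) : ℝ) : ℂ) *
    edgeworthOp χ j (fun y => ((gaussDensity d y : ℝ) : ℂ)) x).re

/-- The order-s Edgeworth signed measure, as a set function `A ↦ ∫_A (density)`. -/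
def edgeworthSM (χ : (Fin d → ℕ) → ℂ) (n s : ℕ) (A : Set (Ed d)) : ℝ :=
  ∫ x in A, edgeworthDensity χ n s x

/-- The standard normal distribution Φ = N(0, I_d) on ℝ^d. -/
def stdGaussian (d : ℕ) : Measure (Ed d) :=
  volume.withDensity fun x => ENNReal.ofReal (gaussDensity d x)

/-- Modulus of continuity `ω_f(x;ε) = sup {|f z − f y| : z,y ∈ B(x;ε)}`. -/
def oscil (f : Ed d → ℝ) (x : Ed d) (ε : ℝ) : ℝ :=
  sSup {r | ∃ z ∈ Metric.ball x ε, ∃ y ∈ Metric.ball x ε, r = |f z - f y|}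

/-- Averaged modulus of continuity `ω̄_f(ε;μ) = ∫ ω_f(x;ε) dμ(x)`. -/
def oscilBar (f : Ed d → ℝ) (ε : ℝ) (μ : Measure (Ed d)) : ℝ :=
  ∫ x, oscil f x ε ∂μ

/-- `M_s(f) = sup_x |f(x)|/(1+‖x‖^s)`. -/
def Msup (s : ℕ) (f : Ed d → ℝ) : ℝ := ⨆ x : Ed d, |f x| / (1 + ‖x‖ ^ s)

/-- The (uncentered) second-moment matrix `E[X X']` of a measure on ℝ^d. -/
def covMat (μ : Measure (Ed d)) : Matrix (Fin d) (Fin d) ℝ :=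
  Matrix.of fun k l => ∫ x, x k * x l ∂μ

open Classical in
/-- Inverse square root of a matrix (junk value if not positive semidefinite). -/
def matInvSqrt (M : Matrix (Fin d) (Fin d) ℝ) : Matrix (Fin d) (Fin d) ℝ :=
  if h : M.PosSemidef then ((h.1.eigenvectorUnitary : Matrix (Fin d) (Fin d) ℝ) *
    Matrix.diagonal (Real.sqrt ∘ h.1.eigenvalues) *
    (star h.1.eigenvectorUnitary : Matrix (Fin d) (Fin d) ℝ))⁻¹ else 1

open Classical in
/-- Square root of a matrix (junk value if not positive semidefinite). -/
def matSqrt (M : Matrix (Fin d) (Fin d) ℝ) : Matrix (Fin d) (Fin d) ℝ :=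
  if h : M.PosSemidef then (h.1.eigenvectorUnitary : Matrix (Fin d) (Fin d) ℝ) *
    Matrix.diagonal (Real.sqrt ∘ h.1.eigenvalues) *
    (star h.1.eigenvectorUnitary : Matrix (Fin d) (Fin d) ℝ) else 1

/-- Matrix-vector multiplication on Euclidean space. -/
def mulVecE (M : Matrix (Fin d) (Fin d) ℝ) (x : Ed d) : Ed d :=
  (EuclideanSpace.equiv (Fin d) ℝ).symm (M.mulVec (EuclideanSpace.equiv (Fin d) ℝ x))

/-- Marginal distribution of the i-th coordinate. -/
def marginal {n : ℕ} (P : Measure (Fin n → Ed d)) (i : Fin n) : Measure (Ed d) :=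
  P.map fun ω => ω i

/-- `V_{n,P} = (1/n) Σ_i Var_P(X_{i,n})` (for mean-zero coordinates). -/
def Vmat {d : ℕ} (n : ℕ) (P : Measure (Fin n → Ed d)) : Matrix (Fin d) (Fin d) ℝ :=
  (n : ℝ)⁻¹ • ∑ i : Fin n, covMat (marginal P i)

/-- `Q_{n,P}`, the distribution of `n^{−1/2} Σ_i V_{n,P}^{−1/2} X_{i,n}`. -/
def Qmeas {d : ℕ} (n : ℕ) (P : Measure (Fin n → Ed d)) : Measure (Ed d) :=
  P.map fun ω => (Real.sqrt n)⁻¹ • ∑ i, mulVecE (matInvSqrt (Vmat n P)) (ω i)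

/-- `χ̄_{ν,P}`, the average over i of the ν-th cumulant of `V_{n,P}^{−1/2} X_{i,n}`. -/
def chiBar {d : ℕ} (n : ℕ) (P : Measure (Fin n → Ed d)) (ν : Fin d → ℕ) : ℂ :=
  (n : ℂ)⁻¹ * ∑ i : Fin n, cumulant ((marginal P i).map (mulVecE (matInvSqrt (Vmat n P)))) ν

/-- `ρ_{n,s,P} = (1/n) Σ_i E_P ‖X_{i,n}‖^s`. -/
def rhoM {d : ℕ} (n s : ℕ) (P : Measure (Fin n → Ed d)) : ℝ :=
  (n : ℝ)⁻¹ * ∑ i : Fin n, ∫ ω, ‖ω i‖ ^ s ∂P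

/-- The mean weak Cramér condition with parameter (b,c,R) for a collection of
joint distributions of (X_{i,n})_{i=1}^n. -/
def meanWeakCramer {d : ℕ} {n : ℕ} (Ps : Set (Measure (Fin n → Ed d))) (b c R : ℝ) : Prop :=
  ∀ P ∈ Ps, ∀ t : Ed d, R < ‖t‖ →
    (n : ℝ)⁻¹ * ∑ i : Fin n, ‖charFn (marginal P i) t‖ ≤ 1 - c / ‖t‖ ^ b

/-- The weak Cramér condition with parameter (b,c,R) for a single distribution. -/
def weakCramerMeas (μ : Measure (Ed d)) (b c R : ℝ) : Prop :=
  ∀ t : Ed d, R < ‖t‖ → ‖charFn μ t‖ ≤ 1 - c / ‖t‖ ^ b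

/-- The empirical (resampling) measure `(1/n) Σ_j δ_{x_j}`. -/
def empMeas {d n : ℕ} (x : Fin n → Ed d) : Measure (Ed d) :=
  ((n : ℝ≥0∞))⁻¹ • ∑ i : Fin n, Measure.dirac (x i)

/-- Sample mean. -/
def sMean {d n : ℕ} (x : Fin n → Ed d) : Ed d := (n : ℝ)⁻¹ • ∑ i, x i

/-- Sample covariance matrix `V̂_n`. -/
def Vhat {d n : ℕ} (x : Fin n → Ed d) : Matrix (Fin d) (Fin d) ℝ :=
  (n : ℝ)⁻¹ • ∑ i : Fin n, Matrix.of fun k l => (x i k - sMean x k) * (x i l - sMean x l)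

/-- The bootstrap distribution `Q_{n,ℱ_n}`: the conditional distribution, given the
sample x, of `√n V̂_n^{−1/2}(X̄* − X̄)` where `X̄*` is the mean of n i.i.d. draws from
the empirical measure of x. -/
def bootQ {d n : ℕ} (x : Fin n → Ed d) : Measure (Ed d) :=
  (Measure.pi fun _ : Fin n => empMeas x).map
    fun y => Real.sqrt n • mulVecE (matInvSqrt (Vhat x)) (sMean y - sMean x)

/-- `χ*_ν`, the ν-th cumulant of the conditional distribution of a bootstrap draw
given the sample, i.e. of the empirical measure. -/
def bootChi {d n : ℕ} (x : Fin n → Ed d) (ν : Fin d → ℕ) : ℂ := cumulant (empMeas x) ν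

/-- `Q̃_{n,ℱ_n}`, the Edgeworth signed measure built from the bootstrap cumulants. -/
def bootQtilde {d n : ℕ} (s : ℕ) (x : Fin n → Ed d) (A : Set (Ed d)) : ℝ :=
  edgeworthSM (bootChi x) n s A

/-- Event `ℰ_{n,0}(ρ̄) = {(1/n) Σ ‖X_i‖^s ≤ ρ̄}`. -/
def Ev0 {d : ℕ} (n s : ℕ) (ρ : ℝ) : Set (Fin n → Ed d) :=
  {x | (n : ℝ)⁻¹ * ∑ i, ‖x i‖ ^ s ≤ ρ}

/-- Event `ℰ_{n,1}(c₁) = {smallest eigenvalue of V̂_n ≥ c₁}` (via the quadratic form). -/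
def Ev1 {d : ℕ} (n : ℕ) (c₁ : ℝ) : Set (Fin n → Ed d) :=
  {x | ∀ v : Ed d, c₁ * ‖v‖ ^ 2 ≤ (inner ℝ v (mulVecE (Vhat x) v) : ℝ)}

/-- Event `ℰ_{n,2}(c₂)`: all mixed absolute moments of the sample of order ≤ s are ≤ c₂. -/
def Ev2 {d : ℕ} (n s : ℕ) (c₂ : ℝ) : Set (Fin n → Ed d) :=
  {x | ∀ v : Fin d → ℕ, (∑ k, v k) ≤ s → (n : ℝ)⁻¹ * ∑ i, ∏ k, |x i k| ^ (v k) ≤ c₂}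

/-- `ξ(u,v;t) = inf_{q∈ℤ} (t'(u−v) − 2πq)²`. -/
def xiFn {d : ℕ} (t u v : Ed d) : ℝ := ⨅ q : ℤ, ((inner ℝ t (u - v) : ℝ) - 2 * π * (q : ℝ)) ^ 2

/-- Condition (★): `c_R ≤ sup_{‖t‖>R} (1/(2π²)) E_P[inf_q (t'(X₁−X₂) − 2πq)²]`
for X₁, X₂ i.i.d. with distribution P. -/
def condStar {d : ℕ} (P : Measure (Ed d)) (R cR : ℝ) : Prop :=
  cR ≤ ⨆ t : {t : Ed d // R < ‖t‖},
    (2 * π ^ 2)⁻¹ * ∫ p : Ed d × Ed d, xiFn t.1 p.1 p.2 ∂(P.prod P)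

/-! Put `z_j = exp (i t'u_j)` and `S = ∑ z_j`. Summing `z_i + z_j` over the ordered pairs `i ≠ j`
gives `2 (n - 1) S`, so `2 (n - 1) |S| ≤ ∑_{i ≠ j} |z_i + z_j|`. Each term equals `2 |cos (x / 2)|`
with `x = t'(u_i - u_j)`; reducing `x` modulo `2π` into `[-π, π]` and using
`cos y ≤ 1 - 4 y² / π²` on `[-π/2, π/2]` (write `cos y = 1 - 2 sin² (y / 2)` and bound `sin` below
by its chord on `[0, π/4]`) gives `|z_i + z_j| ≤ 2 - 2 ξ(u_i, u_j; t) / π²`.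
Dividing by `2 n (n - 1)` gives the claim. -/

open Finset

namespace Real

theorem div_mul_sin_le_sin {x c : ℝ} (hx : 0 ≤ x) (hxc : x ≤ c) (hc : c ≤ π) :
    x / c * sin c ≤ sin x := by
  rcases hxc.eq_or_lt with rfl | hxc
  · rcases hx.eq_or_lt with rfl | hx
    · simp
    · rw [div_self hx.ne', one_mul]
  have hc₀ : 0 < c := hx.trans_lt hxc
  simpa [div_mul_cancel₀ x hc₀.ne'] using
    strictConcaveOn_sin_Icc.concaveOn.2 ⟨le_rfl, pi_pos.le⟩ ⟨hc₀.le, hc⟩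
      (sub_nonneg.2 ((div_le_one hc₀).2 hxc.le)) (div_nonneg hx hc₀.le) (sub_add_cancel 1 _)

theorem cos_le_one_sub_four_div_pi_sq_mul_sq {x : ℝ} (hx : |x| ≤ π / 2) :
    cos x ≤ 1 - 4 / π ^ 2 * x ^ 2 := by
  rw [← cos_abs, ← sq_abs x]
  have hchord : |x| / 2 / (π / 4) * (√2 / 2) ≤ sin (|x| / 2) :=
    sin_pi_div_four ▸ div_mul_sin_le_sin (by positivity) (by linarith) (by linarith [pi_pos])
  have hsq := pow_le_pow_left₀ (by positivity) hchord 2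
  rw [sin_sq_eq_half_sub, mul_div_cancel₀ _ two_ne_zero] at hsq
  have hsqrt : √2 ^ 2 = 2 := sq_sqrt zero_le_two
  have hchord_sq : (|x| / 2 / (π / 4) * (√2 / 2)) ^ 2 = 2 / π ^ 2 * |x| ^ 2 := by
    field_simp
    rw [hsqrt]
    ring
  rw [hchord_sq] at hsq
  linear_combination 2 * hsq

theorem abs_cos_half_le_one_sub_iInf_sq_div (x : ℝ) :
    |cos (x / 2)| ≤ 1 - (⨅ q : ℤ, (x - 2 * π * q) ^ 2) / π ^ 2 := by
  set q₀ := round (x / (2 * π))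
  set r := x - 2 * π * q₀
  have hr : |r| ≤ π := by
    have hr_eq : r = 2 * π * (x / (2 * π) - q₀) := by field_simp; ring
    have := abs_sub_round (x / (2 * π))
    rw [hr_eq, abs_mul, abs_of_pos two_pi_pos]
    nlinarith [pi_pos]
  have hr₂ : |r / 2| ≤ π / 2 := by rw [abs_div, abs_two]; linarith
  have hcos : |cos (x / 2)| = cos (r / 2) := by
    rw [show x / 2 = r / 2 + q₀ * π by ring, cos_add_int_mul_pi, abs_mul, abs_neg_one_zpow,
      one_mul, abs_of_nonneg (cos_nonneg_of_mem_Icc (abs_le.1 hr₂))]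
  have hinf : ⨅ q : ℤ, (x - 2 * π * q) ^ 2 ≤ r ^ 2 :=
    ciInf_le ⟨0, by rintro _ ⟨q, rfl⟩; positivity⟩ q₀
  calc |cos (x / 2)| = cos (r / 2) := hcos
    _ ≤ 1 - 4 / π ^ 2 * (r / 2) ^ 2 := cos_le_one_sub_four_div_pi_sq_mul_sq hr₂
    _ = 1 - r ^ 2 / π ^ 2 := by ring
    _ ≤ 1 - (⨅ q : ℤ, (x - 2 * π * q) ^ 2) / π ^ 2 := by gcongr

end Real

namespace Complex

theorem norm_exp_mul_I_add_exp_mul_I (a b : ℝ) :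
    ‖exp (a * I) + exp (b * I)‖ = 2 * |Real.cos ((a - b) / 2)| := by
  have h : exp (a * I) + exp (b * I) =
      exp (((a + b) / 2 : ℝ) * I) * (2 * (Real.cos ((a - b) / 2) : ℂ)) := by
    rw [ofReal_cos, cos, mul_div_cancel₀ _ two_ne_zero, mul_add, ← exp_add, ← exp_add]
    congr 2 <;> push_cast <;> ring
  rw [h, norm_mul, norm_exp_ofReal_mul_I, one_mul, norm_mul, Complex.norm_two, norm_real,
    Real.norm_eq_abs]

theorem norm_exp_mul_I_add_exp_mul_I_le (a b : ℝ) :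
    ‖exp (a * I) + exp (b * I)‖ ≤ 2 - 2 / π ^ 2 * ⨅ q : ℤ, (a - b - 2 * π * q) ^ 2 := by
  calc ‖exp (a * I) + exp (b * I)‖ = 2 * |Real.cos ((a - b) / 2)| :=
        norm_exp_mul_I_add_exp_mul_I a b
    _ ≤ 2 * (1 - (⨅ q : ℤ, (a - b - 2 * π * q) ^ 2) / π ^ 2) := by
        gcongr
        exact Real.abs_cos_half_le_one_sub_iInf_sq_div (a - b)
    _ = 2 - 2 / π ^ 2 * ⨅ q : ℤ, (a - b - 2 * π * q) ^ 2 := by ring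

end Complex

theorem Finset.sum_offDiag_add {ι M : Type*} [DecidableEq ι] [AddCommMonoid M]
    (s : Finset ι) (f : ι → M) :
    ∑ p ∈ s.offDiag, (f p.1 + f p.2) = (2 * (#s - 1)) • ∑ i ∈ s, f i := by
  have hfst : ∑ p ∈ s.offDiag, f p.1 = (#s - 1) • ∑ i ∈ s, f i := by
    rw [sum_finset_product _ s s.erase fun p => by simp [mem_offDiag, and_comm, eq_comm],
      smul_sum]
    exact sum_congr rfl fun i hi => by simp only [sum_const, card_erase_of_mem hi]
  have hsnd : ∑ p ∈ s.offDiag, f p.2 = ∑ p ∈ s.offDiag, f p.1 :=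
    sum_nbij' Prod.swap Prod.swap (fun p => by simp [mem_offDiag, ne_comm, and_left_comm])
      (fun p => by simp [mem_offDiag, ne_comm, and_left_comm]) (by simp) (by simp) (by simp)
  rw [sum_add_distrib, hsnd, hfst, two_mul, add_smul]

theorem two_mul_card_sub_one_mul_norm_sum_le {ι E : Type*} [DecidableEq ι]
    [NormedAddCommGroup E] [NormedSpace ℝ E] (s : Finset ι) (f : ι → E) :
    ((2 * (#s - 1) : ℕ) : ℝ) * ‖∑ i ∈ s, f i‖ ≤ ∑ p ∈ s.offDiag, ‖f p.1 + f p.2‖ := by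
  rw [← nsmul_eq_mul, ← RCLike.norm_nsmul ℝ, ← sum_offDiag_add]
  exact norm_sum_le _ _

theorem norm_average_exp_mul_I_le {ι : Type*} [DecidableEq ι] {s : Finset ι} (hs : 2 ≤ #s)
    (θ : ι → ℝ) :
    ‖(#s : ℂ)⁻¹ * ∑ i ∈ s, Complex.exp (θ i * Complex.I)‖ ≤
      1 - (π ^ 2 * #s * ((#s : ℝ) - 1))⁻¹ *
        ∑ p ∈ s.offDiag, ⨅ q : ℤ, (θ p.1 - θ p.2 - 2 * π * q) ^ 2 := by
  set S := ∑ i ∈ s, Complex.exp (θ i * Complex.I)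
  set Ξ := ∑ p ∈ s.offDiag, ⨅ q : ℤ, (θ p.1 - θ p.2 - 2 * π * q) ^ 2
  have hs' : (2 : ℝ) ≤ #s := by exact_mod_cast hs
  have hpairs : 2 * ((#s : ℝ) - 1) * ‖S‖ ≤ 2 * #s * ((#s : ℝ) - 1) - 2 / π ^ 2 * Ξ :=
    calc 2 * ((#s : ℝ) - 1) * ‖S‖ = ((2 * (#s - 1) : ℕ) : ℝ) * ‖S‖ := by
          rw [Nat.cast_mul, Nat.cast_sub (by omega)]
          norm_num
      _ ≤ ∑ p ∈ s.offDiag, ‖Complex.exp (θ p.1 * Complex.I) + Complex.exp (θ p.2 * Complex.I)‖ :=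
          two_mul_card_sub_one_mul_norm_sum_le s _
      _ ≤ ∑ p ∈ s.offDiag, (2 - 2 / π ^ 2 * ⨅ q : ℤ, (θ p.1 - θ p.2 - 2 * π * q) ^ 2) :=
          sum_le_sum fun p _ => Complex.norm_exp_mul_I_add_exp_mul_I_le _ _
      _ = 2 * #s * ((#s : ℝ) - 1) - 2 / π ^ 2 * Ξ := by
          rw [sum_sub_distrib, sum_const, offDiag_card, ← mul_sum, nsmul_eq_mul,
            Nat.cast_sub (Nat.le_mul_self _)]
          push_cast
          ring
  have hπ := pi_pos
  have hs₀ : (0 : ℝ) < #s := by linarith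
  have hs₁ : (0 : ℝ) < #s - 1 := by linarith
  rw [norm_mul, norm_inv, Complex.norm_natCast]
  calc (#s : ℝ)⁻¹ * ‖S‖ = 2 * ((#s : ℝ) - 1) * ‖S‖ / (2 * #s * ((#s : ℝ) - 1)) := by
        field_simp
    _ ≤ (2 * #s * ((#s : ℝ) - 1) - 2 / π ^ 2 * Ξ) / (2 * #s * ((#s : ℝ) - 1)) := by gcongr
    _ = 1 - (π ^ 2 * #s * ((#s : ℝ) - 1))⁻¹ * Ξ := by
        field_simp

theorem one_sub_abs_empirical_charFun_ge_general
    (d : ℕ) (n : ℕ) (hn : 2 ≤ n) (u : Fin n → Ed d) (t : Ed d) :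
    1 - ‖(n : ℂ)⁻¹ *
          ∑ i : Fin n, Complex.exp (((inner ℝ t (u i) : ℝ) : ℂ) * Complex.I)‖ ≥
      (π ^ 2 * n * ((n : ℝ) - 1))⁻¹ *
        ∑ p ∈ Finset.univ.filter fun p : Fin n × Fin n => p.1 ≠ p.2,
          xiFn t (u p.1) (u p.2) := by
  have hoffDiag : univ.filter (fun p : Fin n × Fin n => p.1 ≠ p.2) = univ.offDiag := by
    ext p
    simp [mem_offDiag]
  have hxi (p : Fin n × Fin n) : xiFn t (u p.1) (u p.2) =
      ⨅ q : ℤ, (inner ℝ t (u p.1) - inner ℝ t (u p.2) - 2 * π * q) ^ 2 := by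
    simp only [xiFn, inner_sub_right]
  have hbound := norm_average_exp_mul_I_le (s := univ) (by simpa using hn) fun i => inner ℝ t (u i)
  simp only [card_univ, Fintype.card_fin] at hbound
  rw [hoffDiag, sum_congr rfl fun p _ => hxi p]
  linarith

/-- **Inequality from the proof of Proposition 3.1.** For the empirical measure of
`u_1,…,u_n` (n ≥ 2),
`1 − |E e^{i t'W}| ≥ (1/(π² n(n−1))) Σ_{i≠j} ξ(u_i,u_j;t)` for all t. -/
theorem one_sub_abs_empirical_charFun_ge
    (d : ℕ) (hd : 1 ≤ d) (n : ℕ) (hn : 2 ≤ n) (u : Fin n → Ed d) (t : Ed d) :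
    1 - ‖(n : ℂ)⁻¹ *
          ∑ i : Fin n, Complex.exp (((inner ℝ t (u i) : ℝ) : ℂ) * Complex.I)‖ ≥
      (π ^ 2 * n * ((n : ℝ) - 1))⁻¹ *
        ∑ p ∈ Finset.univ.filter fun p : Fin n × Fin n => p.1 ≠ p.2,
          xiFn t (u p.1) (u p.2) :=
  one_sub_abs_empirical_charFun_ge_general d n hn u t
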